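/- For every real p ≥ 1, the function Q(r) = (3-r)r/(3(1-r)) + ∑_{n=2}^∞ r^n/(3n²) + ∑_{n=2}^∞ (2/3 + 1/(3n²))^p r^{np} - (12 + π²)/36 satisfies Q(0) < 0 and Q(1/2) ≥ (2 - (log 2)²)/6 > 0, and is strictly increasing on (0, 1/2), hence has a unique root in (0, 1/2). -/

import Mathlib

/-!
With `Li₂(r) = ∑_{n ≥ 1} rⁿ / n²`, the second series is `(Li₂(r) - r) / 3`. On `[0, 1)` the
function is therefore the strictly increasing rational part `(3 - r) r / (3 (1 - r))` plus two
nondecreasing power series, minus a constant; at `r = 0` only the constant survives. At `r = 1/2`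
the last series is nonnegative, and Euler's reflection formula
`Li₂(x) + Li₂(1 - x) + log x log (1 - x) = π² / 6` gives `Li₂(1/2) = π²/12 - (log 2)²/2`, which is
exactly the lower bound `(2 - (log 2)²)/6`. The intermediate value theorem yields the root.
-/

open Real Filter Set Topology

noncomputable def dilog (x : ℝ) : ℝ := ∑' n : ℕ, x ^ (n + 1) / ((n : ℝ) + 1) ^ 2

lemma summable_one_div_nat_add_one_sq : Summable (fun n : ℕ => 1 / ((n : ℝ) + 1) ^ 2) := by
  simpa using (summable_nat_add_iff 1).mpr (Real.summable_one_div_nat_pow.mpr one_lt_two)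

lemma norm_dilog_term_le {x : ℝ} (hx : |x| ≤ 1) (n : ℕ) :
    ‖x ^ (n + 1) / ((n : ℝ) + 1) ^ 2‖ ≤ 1 / ((n : ℝ) + 1) ^ 2 := by
  rw [norm_div, norm_pow, Real.norm_eq_abs, Real.norm_of_nonneg (by positivity)]
  gcongr
  exact pow_le_one₀ (abs_nonneg x) hx

lemma summable_dilog_term {x : ℝ} (hx : |x| ≤ 1) :
    Summable (fun n : ℕ => x ^ (n + 1) / ((n : ℝ) + 1) ^ 2) :=
  .of_norm_bounded summable_one_div_nat_add_one_sq (norm_dilog_term_le hx)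

lemma dilog_zero : dilog 0 = 0 := by simp [dilog]

lemma dilog_one : dilog 1 = π ^ 2 / 6 := by
  simpa [dilog] using ((hasSum_nat_add_iff' 1).mpr hasSum_zeta_two).tsum_eq

lemma continuousOn_dilog : ContinuousOn dilog (Icc (-1) 1) :=
  continuousOn_tsum (fun _ => (continuous_pow _).continuousOn.div_const _)
    summable_one_div_nat_add_one_sq fun n _ hx => norm_dilog_term_le (abs_le.mpr hx) n

lemma hasDerivAt_dilog_tsum {x : ℝ} (hx : |x| < 1) :
    HasDerivAt dilog (∑' n : ℕ, x ^ n / ((n : ℝ) + 1)) x := by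
  obtain ⟨c, hxc, hc1⟩ := exists_between hx
  have hc0 : 0 < c := (abs_nonneg x).trans_lt hxc
  refine hasDerivAt_tsum_of_isPreconnected
    (g := fun (n : ℕ) (y : ℝ) => y ^ (n + 1) / ((n : ℝ) + 1) ^ 2)
    (g' := fun n y => y ^ n / ((n : ℝ) + 1)) (u := fun n => c ^ n)
    (summable_geometric_of_lt_one hc0.le hc1) isOpen_Ioo (convex_Ioo (-c) c).isPreconnected
    (fun n y _ => ?_) (fun n y hy => ?_) (y₀ := 0) ⟨neg_neg_of_pos hc0, hc0⟩
    ?_ (abs_lt.mp hxc)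
  · refine ((hasDerivAt_pow (n + 1) y).div_const _).congr_deriv ?_
    push_cast
    field_simp
  · rw [norm_div, norm_pow, Real.norm_eq_abs, Real.norm_of_nonneg (by positivity)]
    calc |y| ^ n / ((n : ℝ) + 1) ≤ |y| ^ n := div_le_self (by positivity) (by simp)
      _ ≤ c ^ n := pow_le_pow_left₀ (abs_nonneg y) (abs_lt.mpr hy).le n
  · simp

lemma tsum_pow_div_nat_add_one {x : ℝ} (hx : |x| < 1) (hx0 : x ≠ 0) :
    ∑' n : ℕ, x ^ n / ((n : ℝ) + 1) = -log (1 - x) / x := by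
  rw [← ((hasSum_pow_div_log_of_abs_lt_one hx).div_const x).tsum_eq]
  congr 1 with n
  rw [pow_succ]
  field_simp

lemma hasDerivAt_dilog {x : ℝ} (hx : |x| < 1) (hx0 : x ≠ 0) :
    HasDerivAt dilog (-log (1 - x) / x) x :=
  tsum_pow_div_nat_add_one hx hx0 ▸ hasDerivAt_dilog_tsum hx

lemma continuousAt_log_mul_log_one_sub_zero :
    ContinuousAt (fun t => log t * log (1 - t)) 0 := by
  have hlog : Tendsto (fun t => t * log t) (𝓝[≠] 0) (𝓝 0) := by
    simpa using continuous_mul_log.continuousAt.tendsto.mono_left (nhdsWithin_le_nhds (a := 0))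
  have hslope : Tendsto (fun t => t⁻¹ * log (1 - t)) (𝓝[≠] 0) (𝓝 (-1)) := by
    have := (((hasDerivAt_id (0 : ℝ)).const_sub 1).log (by norm_num)).tendsto_slope_zero
    simpa using this
  rw [← continuousWithinAt_compl_self, ContinuousWithinAt]
  refine Tendsto.congr' ?_ (by simpa using hlog.mul hslope)
  filter_upwards [self_mem_nhdsWithin] with t (ht : t ≠ 0)
  field_simp

lemma hasDerivAt_dilog_add_dilog_one_sub {x : ℝ} (hx0 : 0 < x) (hx1 : x < 1) :
    HasDerivAt (fun t => dilog t + dilog (1 - t) + log t * log (1 - t)) 0 x := by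
  have habs : ∀ {y : ℝ}, 0 < y → y < 1 → |y| < 1 := fun hy0 hy1 => abs_lt.mpr ⟨by linarith, hy1⟩
  have hsub : HasDerivAt (fun t : ℝ => 1 - t) (-1) x := by
    simpa using (hasDerivAt_id x).const_sub 1
  have h1 := hasDerivAt_dilog (habs hx0 hx1) hx0.ne'
  have h2 := (hasDerivAt_dilog (habs (sub_pos.mpr hx1) (by linarith))
    (sub_pos.mpr hx1).ne').comp x hsub
  have h3 := (hasDerivAt_log hx0.ne').mul (hsub.log (sub_pos.mpr hx1).ne')
  refine ((h1.add h2).add h3).congr_deriv ?_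
  rw [sub_sub_cancel]
  field_simp
  ring

lemma continuousOn_dilog_add_dilog_one_sub {b : ℝ} (hb : b < 1) :
    ContinuousOn (fun t => dilog t + dilog (1 - t) + log t * log (1 - t)) (Icc 0 b) := by
  refine (continuousOn_dilog.mono fun t ht => ⟨by linarith [ht.1], by linarith [ht.2]⟩).add
    (continuousOn_dilog.comp (f := fun t => 1 - t) (by fun_prop)
      fun t ht => ⟨by linarith [ht.2], by linarith [ht.1]⟩) |>.add fun t ht => ?_
  rcases ht.1.eq_or_lt with rfl | ht0
  · exact continuousAt_log_mul_log_one_sub_zero.continuousWithinAt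
  · refine ((continuousAt_log ht0.ne').mul ?_).continuousWithinAt
    exact ContinuousAt.log (f := fun t => 1 - t) (by fun_prop) (by linarith [ht.2])

theorem dilog_add_dilog_one_sub {x : ℝ} (hx0 : 0 < x) (hx1 : x < 1) :
    dilog x + dilog (1 - x) + log x * log (1 - x) = π ^ 2 / 6 := by
  -- Since `log 0 = 0`, the left side equals `dilog 1 = π ^ 2 / 6` at `x = 0`.
  obtain ⟨c, hc, hslope⟩ := exists_hasDerivAt_eq_slope _ (fun _ => 0) hx0
    (continuousOn_dilog_add_dilog_one_sub hx1)
    fun t ht => hasDerivAt_dilog_add_dilog_one_sub ht.1 (ht.2.trans hx1)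
  rw [eq_comm, div_eq_zero_iff, sub_eq_zero, sub_eq_zero] at hslope
  simpa [dilog_zero, dilog_one, hx0.ne'] using hslope

lemma dilog_one_half : dilog (1 / 2) = π ^ 2 / 12 - log 2 ^ 2 / 2 := by
  have h := dilog_add_dilog_one_sub (x := 1 / 2) (by norm_num) (by norm_num)
  rw [show (1 : ℝ) - 1 / 2 = 1 / 2 by norm_num, one_div, log_inv] at h
  linarith

noncomputable def bohrCoeff (n : ℕ) : ℝ := 2 / 3 + 1 / (3 * ((n : ℝ) + 2) ^ 2)

noncomputable def bohrTerm (p r : ℝ) (n : ℕ) : ℝ := bohrCoeff n ^ p * r ^ (((n : ℝ) + 2) * p)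

noncomputable def bohrQ (p r : ℝ) : ℝ :=
  (3 - r) * r / (3 * (1 - r)) + (∑' n : ℕ, r ^ (n + 2) / (3 * ((n : ℝ) + 2) ^ 2))
    + (∑' n : ℕ, bohrTerm p r n) - (12 + π ^ 2) / 36

lemma hasSum_pow_add_two_div {r : ℝ} (hr : |r| ≤ 1) :
    HasSum (fun n : ℕ => r ^ (n + 2) / (3 * ((n : ℝ) + 2) ^ 2)) ((dilog r - r) / 3) := by
  have h := ((hasSum_nat_add_iff' 1).mpr (summable_dilog_term hr).hasSum).div_const 3
  rw [Finset.sum_range_one] at h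
  convert h using 2 with n
  · rfl
  · push_cast
    field_simp
    ring
  · simp [dilog]

lemma bohrCoeff_pos (n : ℕ) : 0 < bohrCoeff n := by
  unfold bohrCoeff
  positivity

lemma bohrCoeff_le_one (n : ℕ) : bohrCoeff n ≤ 1 := by
  unfold bohrCoeff
  have : 1 / (3 * ((n : ℝ) + 2) ^ 2) ≤ 1 / 3 := by
    gcongr
    nlinarith [n.cast_nonneg (α := ℝ)]
  linarith

lemma bohrTerm_nonneg (p : ℝ) {r : ℝ} (hr : 0 ≤ r) (n : ℕ) :
    0 ≤ bohrTerm p r n :=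
  mul_nonneg (rpow_nonneg (bohrCoeff_pos n).le p) (rpow_nonneg hr _)

lemma bohrTerm_le {p r s : ℝ} (hp : 0 ≤ p) (hr : 0 ≤ r) (hrs : r ≤ s) (n : ℕ) :
    bohrTerm p r n ≤ (s ^ p) ^ (n + 2) := by
  have hpow : r ^ (((n : ℝ) + 2) * p) = (r ^ p) ^ (n + 2) := by
    rw [mul_comm, rpow_mul hr, ← rpow_natCast]
    push_cast
    rfl
  rw [bohrTerm, hpow, ← one_mul ((s ^ p) ^ (n + 2))]
  exact mul_le_mul (rpow_le_one (bohrCoeff_pos n).le (bohrCoeff_le_one n) hp)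
    (pow_le_pow_left₀ (rpow_nonneg hr p) (rpow_le_rpow hr hrs hp) _) (by positivity) zero_le_one

lemma summable_rpow_pow_add_two {p s : ℝ} (hp : 0 < p) (hs0 : 0 ≤ s) (hs1 : s < 1) :
    Summable (fun n : ℕ => (s ^ p) ^ (n + 2)) :=
  (summable_nat_add_iff 2).mpr
    (summable_geometric_of_lt_one (rpow_nonneg hs0 p) (rpow_lt_one hs0 hs1 hp))

lemma summable_bohrTerm {p r : ℝ} (hp : 0 < p) (hr0 : 0 ≤ r) (hr1 : r < 1) :
    Summable (bohrTerm p r) :=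
  .of_nonneg_of_le (bohrTerm_nonneg p hr0) (bohrTerm_le hp.le hr0 le_rfl)
    (summable_rpow_pow_add_two hp hr0 hr1)

lemma strictMonoOn_three_sub_mul_div :
    StrictMonoOn (fun r : ℝ => (3 - r) * r / (3 * (1 - r))) (Iio 1) := by
  intro a (ha : a < 1) b (hb : b < 1) hab
  rw [div_lt_div_iff₀ (by linarith) (by linarith)]
  nlinarith [mul_pos (sub_pos.mpr hab) (mul_pos (sub_pos.mpr ha) (sub_pos.mpr hb))]

lemma monotoneOn_tsum_pow_add_two_div :
    MonotoneOn (fun r : ℝ => ∑' n : ℕ, r ^ (n + 2) / (3 * ((n : ℝ) + 2) ^ 2)) (Icc 0 1) := by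
  intro a ha b hb hab
  refine (hasSum_pow_add_two_div (abs_le.mpr ⟨by linarith [ha.1], ha.2⟩)).summable.tsum_le_tsum
    (fun n => ?_) (hasSum_pow_add_two_div (abs_le.mpr ⟨by linarith [hb.1], hb.2⟩)).summable
  gcongr
  exact ha.1

lemma monotoneOn_tsum_bohrTerm {p : ℝ} (hp : 0 < p) :
    MonotoneOn (fun r : ℝ => ∑' n : ℕ, bohrTerm p r n) (Ico 0 1) := by
  intro a ha b hb hab
  refine (summable_bohrTerm hp ha.1 ha.2).tsum_le_tsum (fun n => ?_)
    (summable_bohrTerm hp hb.1 hb.2)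
  exact mul_le_mul_of_nonneg_left (rpow_le_rpow ha.1 hab (by positivity))
    (rpow_nonneg (bohrCoeff_pos n).le p)

lemma strictMonoOn_bohrQ {p : ℝ} (hp : 0 < p) : StrictMonoOn (bohrQ p) (Ico 0 1) := by
  intro a ha b hb hab
  have h1 := strictMonoOn_three_sub_mul_div ha.2 hb.2 hab
  have h2 := monotoneOn_tsum_pow_add_two_div (Ico_subset_Icc_self ha) (Ico_subset_Icc_self hb)
    hab.le
  have h3 := monotoneOn_tsum_bohrTerm hp ha hb hab.le
  simp only at h1 h2 h3
  unfold bohrQ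
  linarith

lemma continuousOn_bohrQ {p s : ℝ} (hp : 0 < p) (hs0 : 0 ≤ s) (hs : s < 1) :
    ContinuousOn (bohrQ p) (Icc 0 s) := by
  have habs : ∀ r ∈ Icc 0 s, |r| ≤ 1 := fun r hr =>
    abs_le.mpr ⟨by linarith [hr.1], by linarith [hr.2]⟩
  have h1 : ContinuousOn (fun r : ℝ => (3 - r) * r / (3 * (1 - r))) (Icc 0 s) :=
    .div (by fun_prop) (by fun_prop) fun r hr => by linarith [hr.2]
  have h2 : ContinuousOn (fun r : ℝ => ∑' n : ℕ, r ^ (n + 2) / (3 * ((n : ℝ) + 2) ^ 2)) (Icc 0 s) :=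
    ((continuousOn_dilog.mono fun r hr => abs_le.mp (habs r hr)).sub continuousOn_id).div_const 3
      |>.congr fun r hr => (hasSum_pow_add_two_div (habs r hr)).tsum_eq
  have h3 : ContinuousOn (fun r : ℝ => ∑' n : ℕ, bohrTerm p r n) (Icc 0 s) := by
    refine continuousOn_tsum (fun n => ?_) (summable_rpow_pow_add_two hp hs0 hs) fun n r hr => ?_
    · exact (continuous_const.mul (continuous_rpow_const (by positivity))).continuousOn
    · rw [Real.norm_of_nonneg (bohrTerm_nonneg p hr.1 n)]
      exact bohrTerm_le hp.le hr.1 hr.2 n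
  exact ((h1.add h2).add h3).sub continuousOn_const

lemma bohrQ_zero {p : ℝ} (hp : p ≠ 0) : bohrQ p 0 < 0 := by
  have hterm (n : ℕ) : bohrTerm p 0 n = 0 := by
    rw [bohrTerm, zero_rpow (mul_ne_zero (by positivity) hp), mul_zero]
  simp only [bohrQ, hterm, tsum_zero]
  norm_num
  positivity

lemma bohrQ_one_half_ge (p : ℝ) : (2 - log 2 ^ 2) / 6 ≤ bohrQ p (1 / 2) := by
  have hdilog := (hasSum_pow_add_two_div (r := 1 / 2) (by norm_num [abs_of_pos])).tsum_eq
  have hnonneg : 0 ≤ ∑' n : ℕ, bohrTerm p (1 / 2) n :=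
    tsum_nonneg (bohrTerm_nonneg p (by norm_num))
  rw [bohrQ, hdilog, dilog_one_half]
  norm_num
  linarith

theorem Q3_signs_strictMono_unique_root (p : ℝ) (hp : 1 ≤ p) :
    ((3-(0:ℝ))*(0:ℝ)/(3*(1-(0:ℝ))) + (∑' n : ℕ, (0:ℝ)^(n+2)/(3*((n:ℝ)+2)^2))
        + (∑' n : ℕ, ((2:ℝ)/3 + 1/(3*((n:ℝ)+2)^2))^p * (0:ℝ)^(((n:ℝ)+2)*p))
        - (12 + Real.pi^2)/36 < 0) ∧
    ((2 - (Real.log 2)^2)/6 ≤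
      (3-((1:ℝ)/2))*((1:ℝ)/2)/(3*(1-(1:ℝ)/2)) + (∑' n : ℕ, ((1:ℝ)/2)^(n+2)/(3*((n:ℝ)+2)^2))
        + (∑' n : ℕ, ((2:ℝ)/3 + 1/(3*((n:ℝ)+2)^2))^p * ((1:ℝ)/2)^(((n:ℝ)+2)*p))
        - (12 + Real.pi^2)/36) ∧
    (0 : ℝ) < (2 - (Real.log 2)^2)/6 ∧
    StrictMonoOn
      (fun r : ℝ => (3-r)*r/(3*(1-r)) + (∑' n : ℕ, r^(n+2)/(3*((n:ℝ)+2)^2))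
        + (∑' n : ℕ, ((2:ℝ)/3 + 1/(3*((n:ℝ)+2)^2))^p * r^(((n:ℝ)+2)*p))
        - (12 + Real.pi^2)/36) (Set.Ioo (0 : ℝ) (1/2)) ∧
    (∃! r : ℝ, r ∈ Set.Ioo (0 : ℝ) (1/2) ∧
      (3-r)*r/(3*(1-r)) + (∑' n : ℕ, r^(n+2)/(3*((n:ℝ)+2)^2))
        + (∑' n : ℕ, ((2:ℝ)/3 + 1/(3*((n:ℝ)+2)^2))^p * r^(((n:ℝ)+2)*p))
        - (12 + Real.pi^2)/36 = 0) := by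
  have hp0 : 0 < p := by linarith
  have hzero : bohrQ p 0 < 0 := bohrQ_zero hp0.ne'
  have hhalf : (2 - log 2 ^ 2) / 6 ≤ bohrQ p (1 / 2) := bohrQ_one_half_ge p
  have hpos : (0 : ℝ) < (2 - log 2 ^ 2) / 6 := by nlinarith [log_two_lt_d9, log_two_gt_d9]
  have hmono : StrictMonoOn (bohrQ p) (Ioo 0 (1 / 2)) :=
    (strictMonoOn_bohrQ hp0).mono fun r hr => ⟨hr.1.le, by linarith [hr.2]⟩
  obtain ⟨r, hr, hr0⟩ := intermediate_value_Ioo (by norm_num : (0 : ℝ) ≤ 1 / 2)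
    (continuousOn_bohrQ hp0 (by norm_num) (by norm_num)) ⟨hzero, hpos.trans_le hhalf⟩
  exact ⟨hzero, hhalf, hpos, hmono, r, ⟨hr, hr0⟩,
    fun y hy => hmono.injOn hy.1 hr (hy.2.trans hr0.symm)⟩
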